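/- arXiv:2603.08325 — 4 statements merged into one kernel-verified Lean document; each statement's English description precedes it below -/
import Mathlib

section
/- Let Λ(x,y) = Σ_{i=1}^N ln P(y_i | x_{i-1}, x_i) be the weight function for a first-order channel, x* a fixed binary sequence of length N, and Rel(S) = Λ(x*,y) − Λ(f_S(x*),y) where f_S flips the bits of x* at positions in S. If W = W₁ ∪ W₂ with W₁, W₂ disjoint nonempty subsets of {1,...,N} and min(W₂) − max(W₁) > 1, then Rel(W) = Rel(W₁) + Rel(W₂). -/
/-- Flip the bits of `x` at the positions in `S`. -/
def flipSeq (S : Finset ℕ) (x : ℕ → Bool) : ℕ → Bool :=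
  fun i => if i ∈ S then !(x i) else x i

/-- First-order weight function: `Λ(x,y) = Σ_{i=1}^N ln P(y_i | x_{i-1}, x_i)`,
where `ℓ i b' b` stands for `ln P(y_i | x_{i-1} = b', x_i = b)` (the received
values `y` are absorbed into `ℓ`). -/
noncomputable def Lam1 (N : ℕ) (ℓ : ℕ → Bool → Bool → ℝ) (x : ℕ → Bool) : ℝ :=
  ∑ i ∈ Finset.Icc 1 N, ℓ i (x (i - 1)) (x i)

/-- Sequence reliability of a set `S`, relative to the hard detection sequence `xs`. -/
noncomputable def Rel1 (N : ℕ) (ℓ : ℕ → Bool → Bool → ℝ) (xs : ℕ → Bool)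
    (S : Finset ℕ) : ℝ :=
  Lam1 N ℓ xs - Lam1 N ℓ (flipSeq S xs)

/-!
Each summand of `Λ` only sees the window `{i - 1, i}`. When the gap between `W₁` and `W₂`
exceeds one, no window meets both sets, so on every window flipping `W₁ ∪ W₂` acts as
flipping just one of them, and the change of each summand splits accordingly.
-/

section FlipSeq

variable {A B S : Finset ℕ} {x : ℕ → Bool} {i : ℕ}

theorem flipSeq_apply_of_notMem (h : i ∉ S) : flipSeq S x i = x i := by
  simp [flipSeq, h]

theorem flipSeq_union_apply_of_notMem_right (h : i ∉ B) :
    flipSeq (A ∪ B) x i = flipSeq A x i := by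
  simp [flipSeq, h]

end FlipSeq

theorem sub_flipSeq_union {M : Type*} [AddCommGroup M] (g : Bool → Bool → M)
    (x : ℕ → Bool) (A B : Finset ℕ) {j k : ℕ}
    (h : (j ∉ A ∧ k ∉ A) ∨ (j ∉ B ∧ k ∉ B)) :
    g (x j) (x k) - g (flipSeq (A ∪ B) x j) (flipSeq (A ∪ B) x k) =
      (g (x j) (x k) - g (flipSeq A x j) (flipSeq A x k)) +
        (g (x j) (x k) - g (flipSeq B x j) (flipSeq B x k)) := by
  rcases h with ⟨hjA, hkA⟩ | ⟨hjB, hkB⟩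
  · rw [Finset.union_comm, flipSeq_union_apply_of_notMem_right hjA,
      flipSeq_union_apply_of_notMem_right hkA, flipSeq_apply_of_notMem hjA,
      flipSeq_apply_of_notMem hkA, sub_self, zero_add]
  · rw [flipSeq_union_apply_of_notMem_right hjB, flipSeq_union_apply_of_notMem_right hkB,
      flipSeq_apply_of_notMem hjB, flipSeq_apply_of_notMem hkB, sub_self, add_zero]

theorem rel1_union_of_forall_window (N : ℕ) (ℓ : ℕ → Bool → Bool → ℝ) (xs : ℕ → Bool)
    {A B : Finset ℕ}
    (h : ∀ i ∈ Finset.Icc 1 N, (i - 1 ∉ A ∧ i ∉ A) ∨ (i - 1 ∉ B ∧ i ∉ B)) :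
    Rel1 N ℓ xs (A ∪ B) = Rel1 N ℓ xs A + Rel1 N ℓ xs B := by
  simp only [Rel1, Lam1, ← Finset.sum_sub_distrib, ← Finset.sum_add_distrib]
  exact Finset.sum_congr rfl fun i hi => sub_flipSeq_union (ℓ i) xs A B (h i hi)

theorem window_notMem_of_max'_add_one_lt_min' {A B : Finset ℕ} (hA : A.Nonempty)
    (hB : B.Nonempty) (hgap : A.max' hA + 1 < B.min' hB) (i : ℕ) :
    (i - 1 ∉ A ∧ i ∉ A) ∨ (i - 1 ∉ B ∧ i ∉ B) := by
  have notMem_A {j : ℕ} (hj : A.max' hA < j) : j ∉ A := fun hjA =>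
    (A.le_max' j hjA).not_gt hj
  have notMem_B {j : ℕ} (hj : j < B.min' hB) : j ∉ B := fun hjB =>
    (B.min'_le j hjB).not_gt hj
  by_cases hi : i ≤ A.max' hA + 1
  · exact Or.inr ⟨notMem_B (by omega), notMem_B (by omega)⟩
  · exact Or.inl ⟨notMem_A (by omega), notMem_A (by omega)⟩

theorem rel_decomposable_general (N : ℕ) (ℓ : ℕ → Bool → Bool → ℝ) (xs : ℕ → Bool)
    (W₁ W₂ : Finset ℕ) (h₁ : W₁.Nonempty) (h₂ : W₂.Nonempty)
    (hgap : W₁.max' h₁ + 1 < W₂.min' h₂) :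
    Rel1 N ℓ xs (W₁ ∪ W₂) = Rel1 N ℓ xs W₁ + Rel1 N ℓ xs W₂ :=
  rel1_union_of_forall_window N ℓ xs fun i _ =>
    window_notMem_of_max'_add_one_lt_min' h₁ h₂ hgap i

/-- Lemma 1: additivity of sequence reliability over sets separated by more
than one index (first-order channel). -/
theorem rel_decomposable (N : ℕ) (ℓ : ℕ → Bool → Bool → ℝ) (xs : ℕ → Bool)
    (W₁ W₂ : Finset ℕ) (h₁ : W₁.Nonempty) (h₂ : W₂.Nonempty)
    (hs₁ : W₁ ⊆ Finset.Icc 1 N) (hs₂ : W₂ ⊆ Finset.Icc 1 N)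
    (hdisj : Disjoint W₁ W₂)
    (hgap : W₁.max' h₁ + 1 < W₂.min' h₂) :
    Rel1 N ℓ xs (W₁ ∪ W₂) = Rel1 N ℓ xs W₁ + Rel1 N ℓ xs W₂ :=
  rel_decomposable_general N ℓ xs W₁ W₂ h₁ h₂ hgap
end

section
/- For an L-th order channel, if W = W₁ ∪ W₂ with W₁, W₂ disjoint nonempty subsets of {1,...,N} and 2 ≤ min(W₂) − max(W₁) ≤ L, then Rel(W) = Rel(W₁) + Rel(W₂) + Σ_{i=min(W₂)}^{min(max(W₁)+L, N)} [ ln( P(y_i | f_{W₁}(x*)_{i-L:i}) / P(y_i | x*_{i-L:i}) ) + ln( P(y_i | f_{W₂}(x*)_{i-L:i}) / P(y_i | f_W(x*)_{i-L:i}) ) ]. -/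
/-- `L`-th order weight function, with `ℓ i x = ln P(y_i | x_{i-L:i})`. -/
noncomputable def LamL (N : ℕ) (ℓ : ℕ → (ℕ → Bool) → ℝ) (x : ℕ → Bool) : ℝ :=
  ∑ i ∈ Finset.Icc 1 N, ℓ i x

/-- Sequence reliability for the `L`-th order channel. -/
noncomputable def RelL (N : ℕ) (ℓ : ℕ → (ℕ → Bool) → ℝ) (xs : ℕ → Bool)
    (S : Finset ℕ) : ℝ :=
  LamL N ℓ xs - LamL N ℓ (flipSeq S xs)

open Finset

def HasMemory (L : ℕ) (ℓ : ℕ → (ℕ → Bool) → ℝ) : Prop :=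
  ∀ i : ℕ, ∀ x x' : ℕ → Bool, (∀ j ∈ Icc (i - L) i, x j = x' j) → ℓ i x = ℓ i x'

@[simp]
lemma flipSeq_empty (x : ℕ → Bool) : flipSeq ∅ x = x := by
  funext i
  simp [flipSeq]

def flipInteraction (ℓ : ℕ → (ℕ → Bool) → ℝ) (x : ℕ → Bool) (S T : Finset ℕ) (i : ℕ) : ℝ :=
  (ℓ i (flipSeq S x) - ℓ i x) + (ℓ i (flipSeq T x) - ℓ i (flipSeq (S ∪ T) x))

lemma relL_union (N : ℕ) (ℓ : ℕ → (ℕ → Bool) → ℝ) (x : ℕ → Bool) (S T : Finset ℕ) :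
    RelL N ℓ x (S ∪ T) =
      RelL N ℓ x S + RelL N ℓ x T + ∑ i ∈ Icc 1 N, flipInteraction ℓ x S T i := by
  simp only [RelL, LamL, flipInteraction, ← sum_sub_distrib, ← sum_add_distrib]
  exact sum_congr rfl fun i _ => by ring

lemma flipInteraction_comm (ℓ : ℕ → (ℕ → Bool) → ℝ) (x : ℕ → Bool) (S T : Finset ℕ) (i : ℕ) :
    flipInteraction ℓ x S T i = flipInteraction ℓ x T S i := by
  rw [flipInteraction, flipInteraction, union_comm]
  ring

namespace HasMemory

variable {L : ℕ} {ℓ : ℕ → (ℕ → Bool) → ℝ}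

lemma apply_flipSeq_congr (hℓ : HasMemory L ℓ) {i : ℕ} {S T : Finset ℕ}
    (h : ∀ j ∈ Icc (i - L) i, j ∈ S ↔ j ∈ T) (x : ℕ → Bool) :
    ℓ i (flipSeq S x) = ℓ i (flipSeq T x) :=
  hℓ i _ _ fun j hj => by simp [flipSeq, h j hj]

lemma flipInteraction_eq_zero_of_disjoint_left (hℓ : HasMemory L ℓ) {i : ℕ} {S : Finset ℕ}
    (hS : Disjoint S (Icc (i - L) i)) (x : ℕ → Bool) (T : Finset ℕ) :
    flipInteraction ℓ x S T i = 0 := by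
  have hS' : ∀ j ∈ Icc (i - L) i, j ∉ S := fun j hj hjS => disjoint_left.mp hS hjS hj
  have h₁ : ℓ i (flipSeq S x) = ℓ i (flipSeq ∅ x) :=
    hℓ.apply_flipSeq_congr (fun j hj => by simp [hS' j hj]) x
  have h₂ : ℓ i (flipSeq (S ∪ T) x) = ℓ i (flipSeq T x) :=
    hℓ.apply_flipSeq_congr (fun j hj => by simp [hS' j hj]) x
  simp only [flipInteraction, h₁, h₂, flipSeq_empty]
  ring

lemma flipInteraction_eq_zero_of_disjoint_right (hℓ : HasMemory L ℓ) {i : ℕ} {T : Finset ℕ}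
    (hT : Disjoint T (Icc (i - L) i)) (x : ℕ → Bool) (S : Finset ℕ) :
    flipInteraction ℓ x S T i = 0 := by
  rw [flipInteraction_comm]
  exact hℓ.flipInteraction_eq_zero_of_disjoint_left hT x S

/-- Outside `[min T, max S + L]` the window of `i` misses `S` or `T`. -/
lemma flipInteraction_eq_zero_of_notMem_Icc (hℓ : HasMemory L ℓ) {S T : Finset ℕ}
    (hS : S.Nonempty) (hT : T.Nonempty) {i : ℕ} (hi : i ∉ Icc (T.min' hT) (S.max' hS + L))
    (x : ℕ → Bool) : flipInteraction ℓ x S T i = 0 := by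
  rw [mem_Icc, not_and_or, not_le, not_le] at hi
  rcases hi with hlt | hgt
  · refine hℓ.flipInteraction_eq_zero_of_disjoint_right (disjoint_left.mpr fun j hj hjw => ?_) x S
    have := T.min'_le j hj
    rw [mem_Icc] at hjw
    omega
  · refine hℓ.flipInteraction_eq_zero_of_disjoint_left (disjoint_left.mpr fun j hj hjw => ?_) x T
    have := S.le_max' j hj
    rw [mem_Icc] at hjw
    omega

end HasMemory

theorem rel_partially_decomposable_general (L N : ℕ) (ℓ : ℕ → (ℕ → Bool) → ℝ)
    (hloc : ∀ i : ℕ, ∀ x x' : ℕ → Bool,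
      (∀ j ∈ Finset.Icc (i - L) i, x j = x' j) → ℓ i x = ℓ i x')
    (xs : ℕ → Bool) (W₁ W₂ : Finset ℕ) (h₁ : W₁.Nonempty) (h₂ : W₂.Nonempty)
    (hs₂ : W₂ ⊆ Finset.Icc 1 N) :
    RelL N ℓ xs (W₁ ∪ W₂) = RelL N ℓ xs W₁ + RelL N ℓ xs W₂ +
      ∑ i ∈ Finset.Icc (W₂.min' h₂) (min (W₁.max' h₁ + L) N),
        ((ℓ i (flipSeq W₁ xs) - ℓ i xs) +
          (ℓ i (flipSeq W₂ xs) - ℓ i (flipSeq (W₁ ∪ W₂) xs))) := by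
  have hmin : 1 ≤ W₂.min' h₂ := (mem_Icc.mp (hs₂ (W₂.min'_mem h₂))).1
  have hsub : Icc (W₂.min' h₂) (min (W₁.max' h₁ + L) N) ⊆ Icc 1 N := by
    intro i hi
    rw [mem_Icc] at hi ⊢
    omega
  rw [relL_union, ← sum_subset hsub]
  · rfl
  · intro i hiN hi
    refine HasMemory.flipInteraction_eq_zero_of_notMem_Icc hloc h₁ h₂ (fun hi' => hi ?_) xs
    rw [mem_Icc] at hiN hi' ⊢
    omega

/-- Lemma 5: the partially-decomposable case. If the gap between `W₁` and `W₂`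
is between `2` and `L`, then `Rel(W) = Rel(W₁) + Rel(W₂)` plus a correction sum
of log-likelihood-ratio terms over `min(W₂) ≤ i ≤ min(max(W₁)+L, N)`. -/
theorem rel_partially_decomposable (L N : ℕ) (ℓ : ℕ → (ℕ → Bool) → ℝ)
    (hloc : ∀ i : ℕ, ∀ x x' : ℕ → Bool,
      (∀ j ∈ Finset.Icc (i - L) i, x j = x' j) → ℓ i x = ℓ i x')
    (xs : ℕ → Bool) (W₁ W₂ : Finset ℕ) (h₁ : W₁.Nonempty) (h₂ : W₂.Nonempty)
    (hs₁ : W₁ ⊆ Finset.Icc 1 N) (hs₂ : W₂ ⊆ Finset.Icc 1 N)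
    (hdisj : Disjoint W₁ W₂)
    (hgap₁ : W₁.max' h₁ + 2 ≤ W₂.min' h₂)
    (hgap₂ : W₂.min' h₂ ≤ W₁.max' h₁ + L) :
    RelL N ℓ xs (W₁ ∪ W₂) = RelL N ℓ xs W₁ + RelL N ℓ xs W₂ +
      ∑ i ∈ Finset.Icc (W₂.min' h₂) (min (W₁.max' h₁ + L) N),
        ((ℓ i (flipSeq W₁ xs) - ℓ i xs) +
          (ℓ i (flipSeq W₂ xs) - ℓ i (flipSeq (W₁ ∪ W₂) xs))) :=
  rel_partially_decomposable_general L N ℓ hloc xs W₁ W₂ h₁ h₂ hs₂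
end

section
/- Minimizing the sum of burst reliabilities over codewords is equivalent to maximum-likelihood decoding: argmin_m Σ_{t=1}^{ζ(m)} Rel(I_t(e(m))) = argmax_m Λ(x(m), y), where I_t(e(m)) are the error bursts of e(m) = x* ⊕ x(m). -/
/-- Error-burst partition for the first-order channel. -/
def IsBurstPartition1 (I : Finset ℕ) (P : Finset (Finset ℕ)) : Prop :=
  (∀ B ∈ P, B.Nonempty) ∧
  (∀ B ∈ P, ∀ C ∈ P, B ≠ C → Disjoint B C) ∧
  (P.sup id = I) ∧
  (∀ B ∈ P, ∀ a ∈ B, ∀ b ∈ B, ∀ c : ℕ, a ≤ c → c ≤ b → c ∈ B) ∧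
  (∀ B ∈ P, ∀ C ∈ P, B ≠ C → ∀ a ∈ B, ∀ b ∈ C, a + 2 ≤ b ∨ b + 2 ≤ a)

theorem flipSeq_of_notMem {S : Finset ℕ} {i : ℕ} (x : ℕ → Bool) (h : i ∉ S) :
    flipSeq S x i = x i := by
  simp [flipSeq, h]

theorem flipSeq_congr {S T : Finset ℕ} {i : ℕ} (x : ℕ → Bool) (h : i ∈ S ↔ i ∈ T) :
    flipSeq S x i = flipSeq T x i :=
  if_congr h rfl rfl

namespace IsBurstPartition1

variable {D : Finset ℕ} {P : Finset (Finset ℕ)}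

theorem mem_iff_exists (hP : IsBurstPartition1 D P) {j : ℕ} : j ∈ D ↔ ∃ B ∈ P, j ∈ B := by
  rw [← hP.2.2.1, Finset.mem_sup]
  rfl

theorem eq_of_mem_of_mem (hP : IsBurstPartition1 D P) {B C : Finset ℕ} (hB : B ∈ P)
    (hC : C ∈ P) {a b : ℕ} (ha : a ∈ B) (hb : b ∈ C) (hab : a ≤ b + 1) (hba : b ≤ a + 1) :
    B = C := by
  by_contra hne
  have := hP.2.2.2.2 B hB C hC hne a ha b hb
  omega

theorem sum_sub_flipSeq_window (hP : IsBurstPartition1 D P) (f : Bool → Bool → ℝ)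
    (xs : ℕ → Bool) {j k : ℕ} (hjk : j ≤ k + 1) (hkj : k ≤ j + 1) :
    ∑ B ∈ P, (f (xs j) (xs k) - f (flipSeq B xs j) (flipSeq B xs k)) =
      f (xs j) (xs k) - f (flipSeq D xs j) (flipSeq D xs k) := by
  by_cases hmeets : ∃ B₀ ∈ P, j ∈ B₀ ∨ k ∈ B₀
  · obtain ⟨B₀, hB₀, hB₀jk⟩ := hmeets
    have unique : ∀ B ∈ P, (j ∈ B ∨ k ∈ B) → B = B₀ := by
      intro B hB hBjk
      rcases hBjk with h | h <;> rcases hB₀jk with h₀ | h₀ <;>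
        exact hP.eq_of_mem_of_mem hB hB₀ h h₀ (by omega) (by omega)
    have agree : ∀ i, (i = j ∨ i = k) → flipSeq B₀ xs i = flipSeq D xs i := by
      intro i hi
      refine flipSeq_congr xs ⟨fun h => hP.mem_iff_exists.2 ⟨B₀, hB₀, h⟩, fun h => ?_⟩
      obtain ⟨C, hC, hiC⟩ := hP.mem_iff_exists.1 h
      rcases hi with rfl | rfl
      · exact unique C hC (.inl hiC) ▸ hiC
      · exact unique C hC (.inr hiC) ▸ hiC
    rw [Finset.sum_eq_single_of_mem B₀ hB₀, agree j (.inl rfl), agree k (.inr rfl)]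
    intro B hB hne
    rw [flipSeq_of_notMem xs fun h => hne (unique B hB (.inl h)),
      flipSeq_of_notMem xs fun h => hne (unique B hB (.inr h)), sub_self]
  · push Not at hmeets
    have hjD : j ∉ D := fun h => by
      obtain ⟨B, hB, hjB⟩ := hP.mem_iff_exists.1 h
      exact (hmeets B hB).1 hjB
    have hkD : k ∉ D := fun h => by
      obtain ⟨B, hB, hkB⟩ := hP.mem_iff_exists.1 h
      exact (hmeets B hB).2 hkB
    rw [flipSeq_of_notMem xs hjD, flipSeq_of_notMem xs hkD, sub_self]
    refine Finset.sum_eq_zero fun B hB => ?_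
    rw [flipSeq_of_notMem xs (hmeets B hB).1, flipSeq_of_notMem xs (hmeets B hB).2, sub_self]

theorem sum_rel1 (hP : IsBurstPartition1 D P) (N : ℕ) (ℓ : ℕ → Bool → Bool → ℝ)
    (xs : ℕ → Bool) : ∑ B ∈ P, Rel1 N ℓ xs B = Rel1 N ℓ xs D := by
  simp only [Rel1, Lam1, ← Finset.sum_sub_distrib]
  rw [Finset.sum_comm]
  exact Finset.sum_congr rfl fun i _ =>
    hP.sum_sub_flipSeq_window (ℓ i) xs (by omega) (by omega)

end IsBurstPartition1

theorem sgrand_isi_eq_ml_general (N M : ℕ) (ℓ : ℕ → Bool → Bool → ℝ) (xs : ℕ → Bool)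
    (D : Fin M → Finset ℕ)
    (P : Fin M → Finset (Finset ℕ)) (hP : ∀ m, IsBurstPartition1 (D m) (P m))
    (x : Fin M → ℕ → Bool) (hx : ∀ m, x m = flipSeq (D m) xs) (m : Fin M) :
    (∀ m', ∑ B ∈ P m, Rel1 N ℓ xs B ≤ ∑ B ∈ P m', Rel1 N ℓ xs B) ↔
      (∀ m', Lam1 N ℓ (x m') ≤ Lam1 N ℓ (x m)) := by
  have burst_sum : ∀ m', ∑ B ∈ P m', Rel1 N ℓ xs B = Lam1 N ℓ xs - Lam1 N ℓ (x m') := by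
    intro m'
    rw [(hP m').sum_rel1, hx m', Rel1]
  simp only [burst_sum, sub_le_sub_iff_left]

/-- Theorem 1 (SGRAND-ISI = ML): a message minimizes the sum of burst
reliabilities of its error pattern iff it maximizes the likelihood `Λ(x(m), y)`. -/
theorem sgrand_isi_eq_ml (N M : ℕ) (ℓ : ℕ → Bool → Bool → ℝ) (xs : ℕ → Bool)
    (D : Fin M → Finset ℕ) (hD : ∀ m, D m ⊆ Finset.Icc 1 N)
    (P : Fin M → Finset (Finset ℕ)) (hP : ∀ m, IsBurstPartition1 (D m) (P m))
    (x : Fin M → ℕ → Bool) (hx : ∀ m, x m = flipSeq (D m) xs) (m : Fin M) :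
    (∀ m', ∑ B ∈ P m, Rel1 N ℓ xs B ≤ ∑ B ∈ P m', Rel1 N ℓ xs B) ↔
      (∀ m', Lam1 N ℓ (x m') ≤ Lam1 N ℓ (x m)) :=
  sgrand_isi_eq_ml_general N M ℓ xs D P hP x hx m
end

section
/- For a first-order channel, if S = {a,...,b} and T = {c,...,d} are two intervals of consecutive integers in {1,...,N} with b + 2 ≤ c (separated by at least one index), then flipping S∪T in x* yields Λ(x*,y) − Λ(f_{S∪T}(x*),y) = [Λ(x*,y) − Λ(f_S(x*),y)] + [Λ(x*,y) − Λ(f_T(x*),y)]; moreover each term Λ(x*,y) − Λ(f_S(x*),y) only depends on the coordinates y_i for a ≤ i ≤ min(b+1, N). -/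
/-- First-order weight function with explicit dependence on the received values
`y`: `Λ(x,y) = Σ_{i=1}^N ℓ i (y i) x_{i-1} x_i` with `ℓ i y_i b' b = ln P(y_i | b', b)`. -/
noncomputable def Lam1y (N : ℕ) (ℓ : ℕ → ℝ → Bool → Bool → ℝ) (y : ℕ → ℝ)
    (x : ℕ → Bool) : ℝ :=
  ∑ i ∈ Finset.Icc 1 N, ℓ i (y i) (x (i - 1)) (x i)

/-- Sequence reliability, with explicit dependence on `y`. -/
noncomputable def Rel1y (N : ℕ) (ℓ : ℕ → ℝ → Bool → Bool → ℝ) (y : ℕ → ℝ)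
    (xs : ℕ → Bool) (S : Finset ℕ) : ℝ :=
  Lam1y N ℓ y xs - Lam1y N ℓ y (flipSeq S xs)

/-!
Since the channel is first order, `Rel(S)` is a sum over `i` of terms that only see
`y_i`, `x_{i-1}` and `x_i`. The `i`-th term vanishes unless `i - 1` or `i` lies in `S`,
so it involves only `y_i` for such `i`; and when `S` and `T` are separated by a gap, no
index `i` has `{i - 1, i}` meeting both, so each term of `Rel(S ∪ T)` is the term of
`Rel(S)` or that of `Rel(T)`, the other one vanishing.
-/

open Finset

section Reliability

variable (N : ℕ) (ℓ : ℕ → ℝ → Bool → Bool → ℝ) (xs : ℕ → Bool)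

lemma rel1y_eq_sum (y : ℕ → ℝ) (S : Finset ℕ) :
    Rel1y N ℓ y xs S = ∑ i ∈ Icc 1 N,
      (ℓ i (y i) (xs (i - 1)) (xs i) - ℓ i (y i) (flipSeq S xs (i - 1)) (flipSeq S xs i)) :=
  (sum_sub_distrib _ _).symm

lemma flipSeq_union_of_notMem_right {S T : Finset ℕ} {j : ℕ} (hj : j ∉ T) :
    flipSeq (S ∪ T) xs j = flipSeq S xs j := by
  simp [flipSeq, hj]

lemma flipSeq_union_of_notMem_left {S T : Finset ℕ} {j : ℕ} (hj : j ∉ S) :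
    flipSeq (S ∪ T) xs j = flipSeq T xs j := by
  simp [flipSeq, hj]

lemma flipSeq_of_notMem_s16 {S : Finset ℕ} {j : ℕ} (hj : j ∉ S) : flipSeq S xs j = xs j :=
  if_neg hj

theorem rel1y_union_of_separated (y : ℕ → ℝ) {S T : Finset ℕ}
    (hST : ∀ s ∈ S, ∀ t ∈ T, s + 1 < t ∨ t + 1 < s) :
    Rel1y N ℓ y xs (S ∪ T) = Rel1y N ℓ y xs S + Rel1y N ℓ y xs T := by
  rw [rel1y_eq_sum, rel1y_eq_sum, rel1y_eq_sum, ← sum_add_distrib]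
  refine sum_congr rfl fun i _ => ?_
  by_cases hT : i - 1 ∈ T ∨ i ∈ T
  · have hS : i - 1 ∉ S ∧ i ∉ S := by
      constructor <;> intro hs <;> rcases hT with ht | ht <;> have := hST _ hs _ ht <;> omega
    simp only [flipSeq_union_of_notMem_left xs hS.1, flipSeq_union_of_notMem_left xs hS.2,
      flipSeq_of_notMem_s16 xs hS.1, flipSeq_of_notMem_s16 xs hS.2]
    ring
  · obtain ⟨hT₁, hT₂⟩ := not_or.mp hT
    simp only [flipSeq_union_of_notMem_right xs hT₁, flipSeq_union_of_notMem_right xs hT₂,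
      flipSeq_of_notMem_s16 xs hT₁, flipSeq_of_notMem_s16 xs hT₂]
    ring

theorem rel1y_congr_of_eq_near {y y' : ℕ → ℝ} {S : Finset ℕ}
    (h : ∀ i ∈ Icc 1 N, (i - 1 ∈ S ∨ i ∈ S) → y i = y' i) :
    Rel1y N ℓ y xs S = Rel1y N ℓ y' xs S := by
  rw [rel1y_eq_sum, rel1y_eq_sum]
  refine sum_congr rfl fun i hi => ?_
  by_cases hS : i - 1 ∈ S ∨ i ∈ S
  · rw [h i hi hS]
  · obtain ⟨hS₁, hS₂⟩ := not_or.mp hS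
    simp only [flipSeq_of_notMem_s16 xs hS₁, flipSeq_of_notMem_s16 xs hS₂, sub_self]

end Reliability

theorem rel_intervals_additive_and_local_general (N a b c d : ℕ)
    (ℓ : ℕ → ℝ → Bool → Bool → ℝ) (xs : ℕ → Bool)
    (hbc : b + 2 ≤ c) :
    (∀ y : ℕ → ℝ,
      Rel1y N ℓ y xs (Finset.Icc a b ∪ Finset.Icc c d) =
        Rel1y N ℓ y xs (Finset.Icc a b) + Rel1y N ℓ y xs (Finset.Icc c d)) ∧
    (∀ y y' : ℕ → ℝ, (∀ i ∈ Finset.Icc a (min (b + 1) N), y i = y' i) →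
      Rel1y N ℓ y xs (Finset.Icc a b) = Rel1y N ℓ y' xs (Finset.Icc a b)) := by
  refine ⟨fun y => rel1y_union_of_separated N ℓ xs y fun s hs t ht => ?_,
    fun y y' h => rel1y_congr_of_eq_near N ℓ xs fun i hi hS => h i ?_⟩
  · simp only [mem_Icc] at hs ht
    omega
  · simp only [mem_Icc] at hi hS ⊢
    omega

/-- For two intervals `S = {a,…,b}`, `T = {c,…,d}` in `{1,…,N}` separated by at
least one index, reliability is additive; moreover `Rel(S)` depends on `y` only
through the coordinates `y_i` for `a ≤ i ≤ min(b+1, N)`. -/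
theorem rel_intervals_additive_and_local (N a b c d : ℕ)
    (ℓ : ℕ → ℝ → Bool → Bool → ℝ) (xs : ℕ → Bool)
    (ha : 1 ≤ a) (hab : a ≤ b) (hbc : b + 2 ≤ c) (hcd : c ≤ d) (hdN : d ≤ N) :
    (∀ y : ℕ → ℝ,
      Rel1y N ℓ y xs (Finset.Icc a b ∪ Finset.Icc c d) =
        Rel1y N ℓ y xs (Finset.Icc a b) + Rel1y N ℓ y xs (Finset.Icc c d)) ∧
    (∀ y y' : ℕ → ℝ, (∀ i ∈ Finset.Icc a (min (b + 1) N), y i = y' i) →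
      Rel1y N ℓ y xs (Finset.Icc a b) = Rel1y N ℓ y' xs (Finset.Icc a b)) :=
  rel_intervals_additive_and_local_general N a b c d ℓ xs hbc
end
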